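/- Let f(x) = a_0x + a_1x^q + ... + a_{k-1}x^{q^{k-1}} - x^{q^k} ∈ F_{q^n}[x] with a_0 ≠ 0, let A be its k×k companion matrix (subdiagonal 1's, last column (a_0,...,a_{k-1})^T), and set B = A·A^q·...·A^{q^{n-1}}. Then the splitting field of f over F_{q^n} is F_{q^{nm}}, where m is the multiplicative order of the matrix B. -/

import Mathlib

/-!
A root `x` of `f` gives the row vector `v(x) = (x, x^q, …, x^{q^{k-1}})`, and the shape of the
companion matrix is exactly the relation `v(x) A = v(x^q)`. Applying the `q`-power Frobenius to the
coefficients, `v(x) B^d = v(x^{q^{nd}})`. If all `q^k` roots lie in `𝔽_{q^{nd}}`, each column of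
`B^d - 1` gives a `q`-polynomial of degree `< q^k` vanishing at `q^k` points, so `B^d = 1`.
Conversely, if `B^d = 1` then every root of `f` in an algebraic closure is fixed by
`x ↦ x^{q^{nd}}`, hence lies in `𝔽_{q^{nd}}`, and there are `q^k` of them because `f' = a_0 ≠ 0`.
-/

open Matrix Polynomial

section

variable {R S : Type*} {k : ℕ}

def companion [Zero R] [One R] (c : Fin k → R) : Matrix (Fin k) (Fin k) R :=
  Matrix.of fun i j : Fin k =>
    if (i : ℕ) = (j : ℕ) + 1 then 1 else if (j : ℕ) = k - 1 then c i else 0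

def twistedProd [Semiring R] (q s : ℕ) (A : Matrix (Fin k) (Fin k) R) :
    Matrix (Fin k) (Fin k) R :=
  ((List.range s).map fun t => A.map (· ^ q ^ t)).prod

def powVec [Monoid R] (q : ℕ) (x : R) : Fin k → R := fun i => x ^ q ^ (i : ℕ)

noncomputable def linearized [Semiring R] (q : ℕ) (w : Fin k → R) : R[X] :=
  ∑ i, C (w i) * X ^ q ^ (i : ℕ)

lemma pow_pow_pow_add [Monoid R] (x : R) (q s t : ℕ) : (x ^ q ^ s) ^ q ^ t = x ^ q ^ (s + t) := by
  rw [← pow_mul, ← pow_add]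

lemma map_companion [Zero R] [One R] [Zero S] [One S] (c : Fin k → R) {f : R → S}
    (h0 : f 0 = 0) (h1 : f 1 = 1) : (companion c).map f = companion fun i => f (c i) := by
  ext i j
  simp only [companion, map_apply, of_apply]
  split_ifs <;> simp only [h0, h1]

lemma vecMul_companion [CommSemiring R] {q : ℕ} {c : Fin k → R} {x : R}
    (hx : x ^ q ^ k = ∑ i, c i * x ^ q ^ (i : ℕ)) :
    powVec q x ᵥ* companion c = powVec q (x ^ q) := by
  ext j
  have hshift : (x ^ q) ^ q ^ (j : ℕ) = x ^ q ^ ((j : ℕ) + 1) := by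
    rw [← pow_mul, ← pow_succ']
  rw [powVec, hshift, vecMul, dotProduct]
  rcases lt_or_ge ((j : ℕ) + 1) k with hj | hj
  · rw [Finset.sum_eq_single ⟨j + 1, hj⟩]
    · simp [companion, powVec]
    · intro i _ hi
      have : (i : ℕ) ≠ j + 1 := fun h => hi (Fin.ext h)
      simp [companion, this, show (j : ℕ) ≠ k - 1 by omega]
    · simp
  · rw [show (j : ℕ) + 1 = k by omega, hx]
    refine Finset.sum_congr rfl fun i _ => ?_
    simp [companion, show (i : ℕ) ≠ k - 1 + 1 by omega, show (j : ℕ) = k - 1 by omega, powVec,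
      mul_comm]

section Semiring

variable [Semiring R] {q : ℕ} (A : Matrix (Fin k) (Fin k) R)

lemma twistedProd_succ (s : ℕ) :
    twistedProd q (s + 1) A = twistedProd q s A * A.map (· ^ q ^ s) := by
  simp [twistedProd, List.range_succ]

lemma twistedProd_add (m s : ℕ) :
    twistedProd q (m + s) A = twistedProd q m A * twistedProd q s (A.map (· ^ q ^ m)) := by
  simp only [twistedProd, List.range_add, List.map_append, List.prod_append, List.map_map]
  congr 2
  refine List.map_congr_left fun t _ => ?_
  ext i j
  simp [pow_pow_pow_add]

lemma twistedProd_mul_eq_pow {n : ℕ} (hA : A.map (· ^ q ^ n) = A) (d : ℕ) :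
    twistedProd q (n * d) A = twistedProd q n A ^ d := by
  induction d with
  | zero => simp [twistedProd]
  | succ d ih => rw [Nat.mul_succ, add_comm, twistedProd_add, hA, ih, pow_succ']

end Semiring

lemma RingHom.mapMatrix_twistedProd [Semiring R] [Semiring S] (f : R →+* S) (q s : ℕ)
    (A : Matrix (Fin k) (Fin k) R) :
    f.mapMatrix (twistedProd q s A) = twistedProd q s (f.mapMatrix A) := by
  simp only [twistedProd, map_list_prod, List.map_map]
  congr 1
  refine List.map_congr_left fun t _ => ?_
  ext i j
  simp

section Frobenius

variable [CommRing R] {p : ℕ} [ExpChar R p] {e : ℕ}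

lemma pow_pow_eq_iterateFrobenius (x : R) (s : ℕ) :
    x ^ (p ^ e) ^ s = iterateFrobenius R p (e * s) x := by
  rw [iterateFrobenius_def, pow_mul]

lemma vecMul_twistedProd_companion {c : Fin k → R} {x : R}
    (hx : x ^ (p ^ e) ^ k = ∑ i, c i * x ^ (p ^ e) ^ (i : ℕ)) (s : ℕ) :
    powVec (p ^ e) x ᵥ* twistedProd (p ^ e) s (companion c)
      = powVec (p ^ e) (x ^ (p ^ e) ^ s) := by
  induction s with
  | zero => simp [twistedProd]
  | succ s ih =>
    have hq : (p ^ e) ^ s ≠ 0 := pow_ne_zero _ (pow_ne_zero _ (expChar_ne_zero R p))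
    have hxs : (x ^ (p ^ e) ^ s) ^ (p ^ e) ^ k
        = ∑ i, c i ^ (p ^ e) ^ s * (x ^ (p ^ e) ^ s) ^ (p ^ e) ^ (i : ℕ) := by
      simpa only [← pow_pow_eq_iterateFrobenius, map_sum, map_mul, map_pow]
        using congrArg (iterateFrobenius R p (e * s)) hx
    rw [twistedProd_succ, ← vecMul_vecMul, ih,
      map_companion (f := (· ^ _)) _ (zero_pow hq) (one_pow _), vecMul_companion hxs, ← pow_mul,
      ← pow_succ]

lemma vecMul_twistedProd_companion_pow {n : ℕ} {c : Fin k → R}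
    (hc : ∀ i, c i ^ (p ^ e) ^ n = c i) {x : R}
    (hx : x ^ (p ^ e) ^ k = ∑ i, c i * x ^ (p ^ e) ^ (i : ℕ)) (d : ℕ) :
    powVec (p ^ e) x ᵥ* twistedProd (p ^ e) n (companion c) ^ d
      = powVec (p ^ e) (x ^ (p ^ e) ^ (n * d)) := by
  have hq : (p ^ e) ^ n ≠ 0 := pow_ne_zero _ (pow_ne_zero _ (expChar_ne_zero R p))
  have hfix : (companion c).map (· ^ (p ^ e) ^ n) = companion c := by
    rw [map_companion (f := (· ^ _)) _ (zero_pow hq) (one_pow _)]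
    exact congrArg companion (funext hc)
  rw [← twistedProd_mul_eq_pow _ hfix, vecMul_twistedProd_companion hx]

end Frobenius

section Linearized

variable [CommRing R] {q : ℕ} (w : Fin k → R)

lemma aeval_linearized [CommRing S] [Algebra R S] (x : S) :
    aeval x (linearized q w) = ∑ i, algebraMap R S (w i) * x ^ q ^ (i : ℕ) := by
  simp [linearized]

lemma eval_linearized (x : R) : (linearized q w).eval x = ∑ i, w i * x ^ q ^ (i : ℕ) := by
  simp [linearized, eval_finsetSum]

lemma natDegree_linearized_lt (hq : 1 < q) (hk : 0 < k) :
    (linearized q w).natDegree < q ^ k := by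
  refine (natDegree_sum_le_of_forall_le _ _ fun i _ => ?_).trans_lt
    (Nat.pow_lt_pow_right hq (Nat.sub_lt hk one_pos))
  exact (natDegree_C_mul_le _ _).trans
    ((natDegree_X_pow_le _).trans (Nat.pow_le_pow_right (by omega) (by omega)))

lemma coeff_linearized_pow (hq : 1 < q) (i : Fin k) :
    (linearized q w).coeff (q ^ (i : ℕ)) = w i := by
  simp [linearized, coeff_C_mul, coeff_X_pow,
    (Nat.pow_right_injective hq).eq_iff, Fin.val_inj]

lemma eq_zero_of_eval_linearized_eq_zero [IsDomain R] (hq : 1 < q) (hk : 0 < k) {s : Set R}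
    (hs : q ^ k ≤ s.ncard) (h : ∀ x ∈ s, (linearized q w).eval x = 0) : w = 0 := by
  have hfin : s.Finite := Set.finite_of_ncard_pos ((Nat.one_le_pow _ _ (by omega)).trans hs)
  have hzero : linearized q w = 0 :=
    eq_zero_of_natDegree_lt_card_of_eval_eq_zero' _ hfin.toFinset (by simpa using h)
      ((natDegree_linearized_lt w hq hk).trans_le (hs.trans (Set.ncard_eq_toFinset_card s hfin).le))
  ext i
  rw [← coeff_linearized_pow w hq i, hzero, coeff_zero, Pi.zero_apply]

lemma eq_one_of_vecMul_powVec [IsDomain R] (hq : 1 < q) (hk : 0 < k) {s : Set R}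
    (hs : q ^ k ≤ s.ncard) {P : Matrix (Fin k) (Fin k) R}
    (hP : ∀ x ∈ s, powVec q x ᵥ* P = powVec q x) : P = 1 := by
  rw [← sub_eq_zero]
  ext i j
  refine congrFun (eq_zero_of_eval_linearized_eq_zero (fun i => (P - 1) i j) hq hk hs
    fun x hx => ?_) i
  calc (linearized q fun i => (P - 1) i j).eval x = (powVec q x ᵥ* (P - 1)) j := by
        simp [eval_linearized, vecMul, dotProduct, powVec, mul_comm]
    _ = 0 := by rw [vecMul_sub, hP x hx, vecMul_one, sub_self, Pi.zero_apply]

end Linearized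

section Separable

variable [Field R] {q : ℕ} (w : Fin k → R)

lemma natDegree_linearized_sub_X_pow (hq : 1 < q) (hk : 0 < k) :
    (linearized q w - X ^ q ^ k).natDegree = q ^ k := by
  rw [natDegree_sub_eq_right_of_natDegree_lt] <;> rw [natDegree_X_pow]
  exact natDegree_linearized_lt w hq hk

lemma derivative_linearized (hq : (q : R) = 0) (hk : 0 < k) :
    derivative (linearized q w) = C (w ⟨0, hk⟩) := by
  rw [linearized, derivative_sum, Finset.sum_eq_single ⟨0, hk⟩]
  · simp
  · intro i _ hi
    have : (i : ℕ) ≠ 0 := fun h => hi (Fin.ext h)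
    simp [derivative_X_pow, hq, this]
  · simp

lemma separable_linearized_sub_X_pow (hq : (q : R) = 0) (hk : 0 < k) (hw : w ⟨0, hk⟩ ≠ 0) :
    (linearized q w - X ^ q ^ k).Separable := by
  have hder : derivative (linearized q w - X ^ q ^ k) = C (w ⟨0, hk⟩) := by
    simp [derivative_linearized w hq hk, derivative_X_pow, hq, hk.ne']
  rw [separable_def, hder, ← mul_one (C _), isCoprime_mul_unit_left_right (isUnit_C.2 hw.isUnit)]
  exact isCoprime_one_right

end Separable

lemma FiniteField.mem_range_of_pow_card_eq_self {K : Type*} [Field K] [Fintype K] [CommRing R]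
    [IsDomain R] (f : K →+* R) {z : R} (hz : z ^ Fintype.card K = z) : z ∈ Set.range f := by
  classical
  have hroots := roots_map_of_injective_of_card_eq_natDegree f.injective
    (p := X ^ Fintype.card K - X) (by
      rw [roots_X_pow_card_sub_X, X_pow_card_sub_X_natDegree_eq K Fintype.one_lt_card]; rfl)
  have hmem : z ∈ ((X ^ Fintype.card K - X : K[X]).map f).roots := by
    rw [mem_roots ((Polynomial.map_ne_zero_iff f.injective).2
      (X_pow_card_sub_X_ne_zero K Fintype.one_lt_card))]
    simp [hz]
  rw [← hroots, roots_X_pow_card_sub_X] at hmem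
  obtain ⟨x, -, rfl⟩ := Multiset.mem_map.1 hmem
  exact ⟨x, rfl⟩

lemma Polynomial.ncard_setOf_eval_eq_zero_of_rootSet_subset_range {K Ω : Type*} [Field K]
    [Field Ω] [IsAlgClosed Ω] [Algebra K Ω] {F : K[X]} (hF : F.Separable)
    (hroots : F.rootSet Ω ⊆ Set.range (algebraMap K Ω)) :
    {x : K | F.eval x = 0}.ncard = F.natDegree := by
  classical
  have himage : algebraMap K Ω '' {x | F.eval x = 0} = F.rootSet Ω := by
    ext z
    constructor
    · rintro ⟨x, hx, rfl⟩
      rw [mem_rootSet_of_ne hF.ne_zero, aeval_algebraMap_apply_eq_algebraMap_eval, hx, map_zero]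
    · intro hz
      obtain ⟨x, rfl⟩ := hroots hz
      rw [mem_rootSet_of_ne hF.ne_zero, aeval_algebraMap_apply_eq_algebraMap_eval,
        map_eq_zero] at hz
      exact ⟨x, hz, rfl⟩
  rw [← Set.ncard_image_of_injective _ (algebraMap K Ω).injective, himage,
    ← Nat.card_coe_set_eq, Nat.card_eq_fintype_card,
    card_rootSet_eq_natDegree hF (IsAlgClosed.splits _)]

end

section

variable {k : ℕ} {L M : Type*} [Field L] [Fintype L] [Field M] [Fintype M] {p e n d : ℕ}
  (hL : Fintype.card L = (p ^ e) ^ n) (a : Fin k → L)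
include hL

lemma vecMul_mapMatrix_twistedProd_companion_pow {K : Type*} [Field K] [ExpChar K p]
    (φ : L →+* K) {x : K} (hx : x ^ (p ^ e) ^ k = ∑ i, φ (a i) * x ^ (p ^ e) ^ (i : ℕ))
    (d : ℕ) :
    powVec (p ^ e) x ᵥ* φ.mapMatrix (twistedProd (p ^ e) n (companion a) ^ d)
      = powVec (p ^ e) (x ^ (p ^ e) ^ (n * d)) := by
  rw [map_pow, RingHom.mapMatrix_twistedProd, RingHom.mapMatrix_apply,
    map_companion _ φ.map_zero φ.map_one]
  exact vecMul_twistedProd_companion_pow (fun i => by rw [← map_pow, ← hL, FiniteField.pow_card])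
    hx d

variable [Fact p.Prime] [CharP M p] (he : 0 < e) (hk : 0 < k) (g : L →+* M)
  (hM : Fintype.card M = (p ^ e) ^ (n * d))
include he hk hM

lemma twistedProd_companion_pow_eq_one
    (hroots :
      (p ^ e) ^ k ≤ {x : M | x ^ (p ^ e) ^ k = ∑ i, g (a i) * x ^ (p ^ e) ^ (i : ℕ)}.ncard) :
    twistedProd (p ^ e) n (companion a) ^ d = 1 := by
  apply Matrix.map_injective g.injective
  dsimp only
  rw [Matrix.map_one _ g.map_zero g.map_one]
  refine eq_one_of_vecMul_powVec (Nat.one_lt_pow he.ne' (Nat.Prime.one_lt Fact.out)) hk hroots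
    fun x hx => ?_
  rw [← RingHom.mapMatrix_apply, vecMul_mapMatrix_twistedProd_companion_pow hL a g hx d, ← hM,
    FiniteField.pow_card]

lemma ncard_roots_of_twistedProd_companion_pow_eq_one (ha0 : a ⟨0, hk⟩ ≠ 0)
    (hB : twistedProd (p ^ e) n (companion a) ^ d = 1) :
    {x : M | x ^ (p ^ e) ^ k = ∑ i, g (a i) * x ^ (p ^ e) ^ (i : ℕ)}.ncard = (p ^ e) ^ k := by
  set F : M[X] := linearized (p ^ e) (fun i => g (a i)) - X ^ (p ^ e) ^ k
  have hF : F.Separable := separable_linearized_sub_X_pow _ (by simp [he.ne']) hk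
    (by simpa using ha0)
  have hS : {x : M | x ^ (p ^ e) ^ k = ∑ i, g (a i) * x ^ (p ^ e) ^ (i : ℕ)}
      = {x | F.eval x = 0} := by
    ext x
    rw [Set.mem_ofPred_eq, Set.mem_ofPred_eq, eval_sub, eval_linearized, eval_pow, eval_X,
      sub_eq_zero, eq_comm]
  rw [hS, ncard_setOf_eval_eq_zero_of_rootSet_subset_range (Ω := AlgebraicClosure M) hF ?_,
    natDegree_linearized_sub_X_pow _ (Nat.one_lt_pow he.ne' (Nat.Prime.one_lt Fact.out)) hk]
  intro z hz
  rw [mem_rootSet_of_ne hF.ne_zero, map_sub, aeval_linearized, map_pow, aeval_X,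
    sub_eq_zero] at hz
  apply FiniteField.mem_range_of_pow_card_eq_self
  have hfix :=
    vecMul_mapMatrix_twistedProd_companion_pow hL a ((algebraMap M _).comp g) hz.symm d
  rw [hB, map_one, vecMul_one] at hfix
  simpa [hM, powVec] using (congrFun hfix ⟨0, hk⟩).symm

end

universe v

theorem stmt17_general (q n k : ℕ) (hq : IsPrimePow q) (hk : 0 < k)
    (L : Type*) [Field L] [Fintype L] (hL : Fintype.card L = q ^ n)
    (a : Fin k → L) (ha0 : a ⟨0, hk⟩ ≠ 0)
    (A : Matrix (Fin k) (Fin k) L)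
    (hA : A = Matrix.of fun i j : Fin k =>
      if (i : ℕ) = (j : ℕ) + 1 then 1 else if (j : ℕ) = k - 1 then a i else 0)
    (B : Matrix (Fin k) (Fin k) L)
    (hB : B = ((List.range n).map (fun i => A.map (fun y => y ^ q ^ i))).prod) :
    ∀ (M : Type v) [Field M] [Fintype M] (g : L →+* M) (d : ℕ), 0 < d →
      Fintype.card M = q ^ (n * d) →
      (Set.ncard {x : M | (∑ i : Fin k, g (a i) * x ^ q ^ (i : ℕ)) - x ^ q ^ k = 0} = q ^ k
        ↔ orderOf B ∣ d) := by
  intro M _ _ g d _ hM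
  obtain ⟨p, e, hp, he, rfl⟩ := hq
  have : Fact p.Prime := ⟨hp.nat_prime⟩
  have : CharP L p := charP_of_card_eq_prime_pow (hL.trans (pow_mul p e n).symm)
  have : CharP M p := charP_of_injective_ringHom g.injective p
  have hB' : B = twistedProd (p ^ e) n (companion a) := by subst hA; exact hB
  have hS : {x : M | (∑ i, g (a i) * x ^ (p ^ e) ^ (i : ℕ)) - x ^ (p ^ e) ^ k = 0}
      = {x | x ^ (p ^ e) ^ k = ∑ i, g (a i) * x ^ (p ^ e) ^ (i : ℕ)} := by
    ext x
    exact sub_eq_zero.trans eq_comm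
  rw [hS, orderOf_dvd_iff_pow_eq_one, hB']
  exact ⟨fun h => twistedProd_companion_pow_eq_one hL a he hk g hM h.ge,
    ncard_roots_of_twistedProd_companion_pow_eq_one hL a he hk g hM ha0⟩

/-- Let `f(x) = a_0 x + ... + a_{k-1} x^{q^{k-1}} - x^{q^k}` over `F_{q^n}`
with `a_0 ≠ 0`, `A` its companion matrix and `B = A·A^q·...·A^{q^{n-1}}`. The splitting
field of `f` is `F_{q^{nm}}` where `m = orderOf B`: an extension `F_{q^{nd}}` of `F_{q^n}`
contains all `q^k` roots of `f` iff `m ∣ d`. -/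
theorem stmt17 (q n k : ℕ) (hq : IsPrimePow q) (hn : 0 < n) (hk : 0 < k)
    (L : Type*) [Field L] [Fintype L] (hL : Fintype.card L = q ^ n)
    (a : Fin k → L) (ha0 : a ⟨0, hk⟩ ≠ 0)
    (A : Matrix (Fin k) (Fin k) L)
    (hA : A = Matrix.of fun i j : Fin k =>
      if (i : ℕ) = (j : ℕ) + 1 then 1 else if (j : ℕ) = k - 1 then a i else 0)
    (B : Matrix (Fin k) (Fin k) L)
    (hB : B = ((List.range n).map (fun i => A.map (fun y => y ^ q ^ i))).prod) :
    ∀ (M : Type v) [Field M] [Fintype M] (g : L →+* M) (d : ℕ), 0 < d →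
      Fintype.card M = q ^ (n * d) →
      (Set.ncard {x : M | (∑ i : Fin k, g (a i) * x ^ q ^ (i : ℕ)) - x ^ q ^ k = 0} = q ^ k
        ↔ orderOf B ∣ d) :=
  stmt17_general q n k hq hk L hL a ha0 A hA B hB
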